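/- arXiv:1910.05572 — 8 statements merged into one kernel-verified Lean document; each statement's English description precedes it below -/
import Mathlib

section
/- Let E be a b×k matrix with entries that are c-subsets of a v-element message set, entries in each row pairwise disjoint, key uniform on rows, message uniform in E(K,S). If the code has perfect secrecy (P[M=m|S=s] = P[M=m] for all m,s) and every message m satisfies |{K : m appears in row K}| = bck/v, then for every message m and every column s, |{K : m ∈ E(K,s)}| = bc/v. -/
open Finset Function

theorem card_filter_exists_mem_eq_sum_card_filter_mem {κ ι α : Type*} [Fintype κ] [Fintype ι]
    [DecidableEq κ] [DecidableEq α] (E : κ → ι → Finset α)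
    (hdisj : ∀ K, Pairwise (Disjoint on E K)) (m : α) [DecidablePred fun K => ∃ s, m ∈ E K s] :
    #{K | ∃ s, m ∈ E K s} = ∑ s, #{K | m ∈ E K s} := by
  have hcols : (Set.univ : Set ι).PairwiseDisjoint fun s => ({K | m ∈ E K s} : Finset κ) := by
    intro s _ s' _ hss'
    refine disjoint_filter.2 fun K _ hs hs' => ?_
    exact disjoint_left.1 (hdisj K hss') hs hs'
  rw [← card_biUnion (by simpa using hcols)]
  congr 1
  ext K
  simp

theorem stmt_3_general (b k v c : ℕ) (hb : 0 < b)
    (E : Fin b → Fin k → Finset (Fin v))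
    (hdisj : ∀ K, ∀ s s' : Fin k, s ≠ s' → Disjoint (E K s) (E K s'))
    (p : Fin k → ℚ)
    (hsecrecy : ∀ (m : Fin v) (s : Fin k),
      ((univ.filter fun K : Fin b => m ∈ E K s).card : ℚ) / b =
        ∑ s' : Fin k,
          p s' * (((univ.filter fun K : Fin b => m ∈ E K s').card : ℚ) / b))
    (hkappa : ∀ m : Fin v,
      (univ.filter fun K : Fin b => ∃ s, m ∈ E K s).card * v = b * c * k) :
    ∀ (m : Fin v) (s : Fin k),
      (univ.filter fun K : Fin b => m ∈ E K s).card * v = b * c := by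
  intro m s
  -- the right-hand side of `hsecrecy` does not depend on `s`
  have hconst : ∀ s', #{K | m ∈ E K s'} = #{K | m ∈ E K s} := by
    intro s'
    have hdiv := (hsecrecy m s').trans (hsecrecy m s).symm
    exact_mod_cast (div_left_inj' (by positivity : (b : ℚ) ≠ 0)).1 hdiv
  have hcount := hkappa m
  rw [card_filter_exists_mem_eq_sum_card_filter_mem E (fun K s s' => hdisj K s s'),
    sum_congr rfl fun s' _ => hconst s', sum_const, card_univ, Fintype.card_fin,
    smul_eq_mul, mul_assoc, mul_comm (b * c)] at hcount
  exact Nat.eq_of_mul_eq_mul_left s.pos hcount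

theorem stmt_3 (b k v c : ℕ) (hb : 0 < b) (hk : 0 < k) (hv : 0 < v)
    (E : Fin b → Fin k → Finset (Fin v))
    (hcard : ∀ K s, (E K s).card = c)
    (hdisj : ∀ K, ∀ s s' : Fin k, s ≠ s' → Disjoint (E K s) (E K s'))
    (p : Fin k → ℚ) (hp0 : ∀ s, 0 ≤ p s) (hp1 : ∑ s, p s = 1)
    (hsecrecy : ∀ (m : Fin v) (s : Fin k),
      ((univ.filter fun K : Fin b => m ∈ E K s).card : ℚ) / b =
        ∑ s' : Fin k,
          p s' * (((univ.filter fun K : Fin b => m ∈ E K s').card : ℚ) / b))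
    (hkappa : ∀ m : Fin v,
      (univ.filter fun K : Fin b => ∃ s, m ∈ E K s).card * v = b * c * k) :
    ∀ (m : Fin v) (s : Fin k),
      (univ.filter fun K : Fin b => m ∈ E K s).card * v = b * c :=
  stmt_3_general b k v c hb E hdisj p hsecrecy hkappa
end

section
/- Let D_1,…,D_k be an (n,k,c,λ)-EDF in an abelian group G of order n. For the authentication code with keyspace G and encoding rule e_g(i) = D_i + g (for key g ∈ G and source i ∈ {1,…,k}), and for any two distinct messages m, m' ∈ G, the number of keys g such that m ∈ D_i + g and m' ∈ D_j + g for some i ≠ j is exactly λ. -/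
open Finset

/-- The number of ways a group element `g` is realized as an "external difference"
`x - y` with `x ∈ D i`, `y ∈ D j` and `i ≠ j`. -/
def extDiffCount {G : Type*} [AddCommGroup G] [Fintype G] [DecidableEq G] {k : ℕ}
    (D : Fin k → Finset G) (g : G) : ℕ :=
  (univ.filter fun q : (Fin k × Fin k) × G × G =>
    q.1.1 ≠ q.1.2 ∧ q.2.1 ∈ D q.1.1 ∧ q.2.2 ∈ D q.1.2 ∧ q.2.1 - q.2.2 = g).card

/-- A key `g` succeeds exactly when `m - m' = (m - g) - (m' - g)` is an external difference;
disjointness of the blocks makes `g ↦ ((i, j), (m - g, m' - g))` a bijection. -/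
theorem card_keys_eq_extDiffCount {G : Type*} [AddCommGroup G] [Fintype G] [DecidableEq G]
    {k : ℕ} {D : Fin k → Finset G} (hdisj : ∀ i j : Fin k, i ≠ j → Disjoint (D i) (D j))
    (m m' : G) :
    (univ.filter fun g : G => ∃ i j : Fin k, i ≠ j ∧ m - g ∈ D i ∧ m' - g ∈ D j).card =
      extDiffCount D (m - m') := by
  have block_unique : ∀ {i i' : Fin k} {x : G}, x ∈ D i → x ∈ D i' → i = i' := fun hx hx' =>
    by_contra fun h => disjoint_left.mp (hdisj _ _ h) hx hx'
  symm
  refine card_bij (fun q _ => m - q.2.1) ?_ ?_ ?_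
  · rintro ⟨⟨i, j⟩, x, y⟩ hq
    simp only [mem_filter, mem_univ, true_and] at hq ⊢
    obtain ⟨hij, hx, hy, hxy⟩ := hq
    refine ⟨i, j, hij, by simpa using hx, ?_⟩
    rwa [show m' - (m - x) = y by rw [← sub_sub_cancel x y, hxy]; abel]
  · rintro ⟨⟨i, j⟩, x, y⟩ hq ⟨⟨i', j'⟩, x', y'⟩ hq' hkey
    simp only [mem_filter, mem_univ, true_and] at hq hq'
    obtain ⟨-, hx, hy, hxy⟩ := hq
    obtain ⟨-, hx', hy', hxy'⟩ := hq'
    obtain rfl : x = x' := sub_right_injective hkey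
    obtain rfl : y = y' := sub_right_injective (hxy.trans hxy'.symm)
    obtain rfl := block_unique hx hx'
    obtain rfl := block_unique hy hy'
    rfl
  · intro g hg
    simp only [mem_filter, mem_univ, true_and] at hg
    obtain ⟨i, j, hij, hx, hy⟩ := hg
    refine ⟨((i, j), (m - g, m' - g)), ?_, sub_sub_cancel m g⟩
    simp only [mem_filter, mem_univ, true_and]
    exact ⟨hij, hx, hy, sub_sub_sub_cancel_right m m' g⟩

theorem stmt_5_general {G : Type*} [AddCommGroup G] [Fintype G] [DecidableEq G]
    (k lam : ℕ)
    (D : Fin k → Finset G)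
    (hdisj : ∀ i j : Fin k, i ≠ j → Disjoint (D i) (D j))
    (hEDF : ∀ g : G, g ≠ 0 → extDiffCount D g = lam)
    (m m' : G) (hmm : m ≠ m') :
    (univ.filter fun g : G =>
      ∃ i j : Fin k, i ≠ j ∧ m - g ∈ D i ∧ m' - g ∈ D j).card = lam := by
  rw [card_keys_eq_extDiffCount hdisj, hEDF _ (sub_ne_zero.mpr hmm)]

theorem stmt_5 {G : Type*} [AddCommGroup G] [Fintype G] [DecidableEq G]
    (n k c lam : ℕ) (hn : Fintype.card G = n)
    (D : Fin k → Finset G) (hc : ∀ i, (D i).card = c)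
    (hdisj : ∀ i j : Fin k, i ≠ j → Disjoint (D i) (D j))
    (hEDF : ∀ g : G, g ≠ 0 → extDiffCount D g = lam)
    (m m' : G) (hmm : m ≠ m') :
    (univ.filter fun g : G =>
      ∃ i j : Fin k, i ≠ j ∧ m - g ∈ D i ∧ m' - g ∈ D j).card = lam :=
  stmt_5_general k lam D hdisj hEDF m m' hmm
end

section
/- Let D_1,…,D_k be an (n,k,c,λ)-EDF in an abelian group G of order n, giving the authentication code with encoding e_g(i) = D_i + g for g ∈ G. For any key g and any key g' ≠ g, the number of messages m such that m ∈ D_i + g and m ∈ D_j + g' for some i ≠ j is exactly λ. -/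
/-!
Writing `d = g' - g`, the translation `m ↦ m - g` carries the messages in question onto the
elements `x` with `x ∈ D i` and `x - d ∈ D j` for some `i ≠ j`. Since the `D i` are pairwise
disjoint, such an `x` determines the whole external-difference representation
`d = x - (x - d)`, so there are exactly `extDiffCount D d = λ` of them.
-/

open Finset

open Function in
lemma extDiffCount_eq_card_filter {G : Type*} [AddCommGroup G] [Fintype G] [DecidableEq G]
    {k : ℕ} {D : Fin k → Finset G} (hD : Pairwise (Disjoint on D)) (d : G) :
    extDiffCount D d = #{x | ∃ i j, i ≠ j ∧ x ∈ D i ∧ x - d ∈ D j} := by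
  have index_eq {x : G} {i j : Fin k} (hi : x ∈ D i) (hj : x ∈ D j) : i = j :=
    Set.PairwiseDisjoint.elim_finset (hD.set_pairwise Set.univ) (Set.mem_univ i) (Set.mem_univ j) x hi hj
  refine card_nbij (fun q => q.2.1) ?_ ?_ ?_
  · rintro ⟨⟨i, j⟩, x, y⟩ hq
    simp only [coe_filter, mem_univ, true_and, Set.mem_ofPred_eq] at hq ⊢
    obtain ⟨hij, hx, hy, rfl⟩ := hq
    exact ⟨i, j, hij, hx, by rwa [sub_sub_cancel]⟩
  · rintro ⟨⟨i, j⟩, x, y⟩ hq ⟨⟨i', j'⟩, x', y'⟩ hq' (rfl : x = x')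
    simp only [coe_filter, mem_univ, true_and, Set.mem_ofPred_eq] at hq hq'
    obtain ⟨-, hx, hy, hd⟩ := hq
    obtain ⟨-, hx', hy', hd'⟩ := hq'
    obtain rfl : y = y' := sub_right_injective (hd.trans hd'.symm)
    obtain rfl := index_eq hx hx'
    obtain rfl := index_eq hy hy'
    rfl
  · rintro x hx
    simp only [coe_filter, mem_univ, true_and, Set.mem_ofPred_eq] at hx
    obtain ⟨i, j, hij, hi, hj⟩ := hx
    exact ⟨((i, j), x, x - d), by simpa using ⟨hij, hi, hj⟩, rfl⟩

theorem stmt_6_general {G : Type*} [AddCommGroup G] [Fintype G] [DecidableEq G]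
    (k lam : ℕ)
    (D : Fin k → Finset G)
    (hdisj : ∀ i j : Fin k, i ≠ j → Disjoint (D i) (D j))
    (hEDF : ∀ g : G, g ≠ 0 → extDiffCount D g = lam)
    (g g' : G) (hgg : g ≠ g') :
    (univ.filter fun m : G =>
      ∃ i j : Fin k, i ≠ j ∧ m - g ∈ D i ∧ m - g' ∈ D j).card = lam := by
  calc _ = #{x | ∃ i j, i ≠ j ∧ x ∈ D i ∧ x - (g' - g) ∈ D j} :=
        card_equiv (Equiv.subRight g) fun m => by simp [sub_sub_sub_cancel_right]
    _ = extDiffCount D (g' - g) := (extDiffCount_eq_card_filter hdisj _).symm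
    _ = lam := hEDF _ (sub_ne_zero.2 hgg.symm)

theorem stmt_6 {G : Type*} [AddCommGroup G] [Fintype G] [DecidableEq G]
    (n k c lam : ℕ) (hn : Fintype.card G = n)
    (D : Fin k → Finset G) (hc : ∀ i, (D i).card = c)
    (hdisj : ∀ i j : Fin k, i ≠ j → Disjoint (D i) (D j))
    (hEDF : ∀ g : G, g ≠ 0 → extDiffCount D g = lam)
    (g g' : G) (hgg : g ≠ g') :
    (univ.filter fun m : G =>
      ∃ i j : Fin k, i ≠ j ∧ m - g ∈ D i ∧ m - g' ∈ D j).card = lam :=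
  stmt_6_general k lam D hdisj hEDF g g' hgg
end

section
/- Given an (n,k,c,λ)-EDF in an abelian group G, the success probability of the optimal key-substitution attack on the derived authentication code (with equiprobable sources, uniform key, and uniform message encoding) equals c(k−1)/(n−1). -/
open Finset

lemma edf_unique_block {G : Type*} [AddCommGroup G] [Fintype G] [DecidableEq G] {k : ℕ}
    {D : Fin k → Finset G} (hdisj : ∀ i j : Fin k, i ≠ j → Disjoint (D i) (D j))
    {x : G} {i j : Fin k} (hi : x ∈ D i) (hj : x ∈ D j) : i = j := by
  by_contra h
  exact Finset.disjoint_left.mp (hdisj i j h) hi hj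

lemma edf_zero {G : Type*} [AddCommGroup G] [Fintype G] [DecidableEq G] {k : ℕ}
    {D : Fin k → Finset G} (hdisj : ∀ i j : Fin k, i ≠ j → Disjoint (D i) (D j)) :
    extDiffCount D 0 = 0 := by
  rw [extDiffCount, Finset.card_eq_zero, Finset.filter_eq_empty_iff]
  rintro q - ⟨hij, hx, hy, hxy⟩
  have heq : q.2.1 = q.2.2 := sub_eq_zero.mp hxy
  exact hij (edf_unique_block hdisj hx (heq ▸ hy))

lemma edf_sum {G : Type*} [AddCommGroup G] [Fintype G] [DecidableEq G] {k c : ℕ}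
    {D : Fin k → Finset G} (hcD : ∀ i, (D i).card = c) :
    ∑ g : G, extDiffCount D g = k * (k - 1) * c ^ 2 := by
  classical
  set S : Finset ((Fin k × Fin k) × G × G) :=
    univ.filter fun q => q.1.1 ≠ q.1.2 ∧ q.2.1 ∈ D q.1.1 ∧ q.2.2 ∈ D q.1.2 with hS
  have h1 : ∑ g : G, extDiffCount D g = S.card := by
    rw [Finset.card_eq_sum_card_fiberwise (f := fun q => q.2.1 - q.2.2)
      (t := (univ : Finset G)) (fun x _ => mem_univ _)]
    refine Finset.sum_congr rfl fun g _ => ?_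
    rw [extDiffCount, hS, Finset.filter_filter]
    congr 1
    ext q
    simp only [and_assoc]
  have h2 : S.card = ∑ p : Fin k × Fin k, (S.filter fun q => q.1 = p).card :=
    Finset.card_eq_sum_card_fiberwise (fun x _ => mem_univ _)
  have h3 : ∀ p : Fin k × Fin k,
      (S.filter fun q => q.1 = p).card = if p.1 ≠ p.2 then c ^ 2 else 0 := by
    intro p
    by_cases hp : p.1 ≠ p.2
    · rw [if_pos hp]
      have hbij : (S.filter fun q => q.1 = p).card = (D p.1 ×ˢ D p.2).card := by
        apply Finset.card_bij (fun q _ => q.2)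
        · rintro q hq
          simp only [hS, Finset.mem_filter, Finset.mem_univ, true_and] at hq
          obtain ⟨⟨-, hx, hy⟩, hqp⟩ := hq
          subst hqp
          exact Finset.mem_product.mpr ⟨hx, hy⟩
        · rintro q hq q' hq' h
          simp only [hS, Finset.mem_filter] at hq hq'
          exact Prod.ext (hq.2.trans hq'.2.symm) h
        · rintro xy hxy
          rw [Finset.mem_product] at hxy
          exact ⟨(p, xy), by simp [hS, hp, hxy.1, hxy.2], rfl⟩
      rw [hbij, Finset.card_product, hcD, hcD, sq]
    · rw [if_neg hp, Finset.card_eq_zero, Finset.filter_eq_empty_iff]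
      rintro q hq hqp
      simp only [hS, Finset.mem_filter] at hq
      exact hp (hqp ▸ hq.2.1)
  rw [h1, h2]
  simp_rw [h3]
  rw [Finset.sum_ite, Finset.sum_const, Finset.sum_const, smul_eq_mul, smul_eq_mul,
    mul_zero, add_zero]
  have hod : (univ.filter fun p : Fin k × Fin k => p.1 ≠ p.2)
      = (univ : Finset (Fin k)).offDiag := by
    ext p; simp [Finset.mem_offDiag]
  rw [hod, Finset.offDiag_card, Finset.card_univ, Fintype.card_fin]
  have hkk : k * (k - 1) = k * k - k := by
    cases k with
    | zero => simp
    | succ m => simp [Nat.succ_sub_one, Nat.mul_succ, Nat.succ_mul]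
  rw [hkk]

theorem stmt_7 {G : Type*} [AddCommGroup G] [Fintype G] [DecidableEq G]
    (n k c lam : ℕ) (hn : Fintype.card G = n)
    (hk : 0 < k) (hc : 0 < c) (hn1 : 1 < n)
    (D : Fin k → Finset G) (hcD : ∀ i, (D i).card = c)
    (hdisj : ∀ i j : Fin k, i ≠ j → Disjoint (D i) (D j))
    (hEDF : ∀ g : G, g ≠ 0 → extDiffCount D g = lam) :
    ∀ g g' : G, g ≠ g' →
      (((univ.filter fun m : G =>
          ∃ i j : Fin k, i ≠ j ∧ m - g ∈ D i ∧ m - g' ∈ D j).card : ℚ) /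
          ((k : ℚ) * c)) =
        ((c : ℚ) * ((k : ℚ) - 1)) / ((n : ℚ) - 1) := by
  intro g g' hgg'
  -- Step 1: the message count equals lam
  have hcard : (univ.filter fun m : G =>
      ∃ i j : Fin k, i ≠ j ∧ m - g ∈ D i ∧ m - g' ∈ D j).card = lam := by
    rw [← hEDF (g' - g) (sub_ne_zero.mpr (Ne.symm hgg')), extDiffCount]
    refine (Finset.card_bij (fun (q : (Fin k × Fin k) × G × G) _ => q.2.1 + g)
      ?_ ?_ ?_).symm
    · rintro q hq
      simp only [Finset.mem_filter, Finset.mem_univ, true_and] at hq ⊢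
      obtain ⟨hij, hx, hy, hxy⟩ := hq
      refine ⟨q.1.1, q.1.2, hij, by simpa using hx, ?_⟩
      have hy2 : q.2.1 + g - g' = q.2.2 := by
        have h' : q.2.2 = q.2.1 - (g' - g) := by rw [← hxy]; abel
        rw [h']; abel
      rwa [hy2]
    · rintro q hq q' hq' h
      simp only [Finset.mem_filter, Finset.mem_univ, true_and] at hq hq'
      obtain ⟨hij, hx, hy, hxy⟩ := hq
      obtain ⟨hij', hx', hy', hxy'⟩ := hq'
      have h1 : q.2.1 = q'.2.1 := by
        have := h
        simpa using add_right_cancel this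
      have h2 : q.2.2 = q'.2.2 := by
        have : q.2.1 - q.2.2 = q'.2.1 - q'.2.2 := by rw [hxy, hxy']
        rw [h1] at this
        exact (sub_right_injective this).symm ▸ rfl
      have hi : q.1.1 = q'.1.1 := edf_unique_block hdisj hx (h1 ▸ hx')
      have hj : q.1.2 = q'.1.2 := edf_unique_block hdisj hy (h2 ▸ hy')
      exact Prod.ext (Prod.ext hi hj) (Prod.ext h1 h2)
    · rintro m hm
      simp only [Finset.mem_filter, Finset.mem_univ, true_and] at hm
      obtain ⟨i, j, hij, h1, h2⟩ := hm
      refine ⟨((i, j), (m - g, m - g')), ?_, by simp⟩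
      simp only [Finset.mem_filter, Finset.mem_univ, true_and]
      exact ⟨hij, h1, h2, by abel⟩
  -- Step 2: the key identity (n-1) * lam = k * (k-1) * c^2
  have hkey : (n - 1) * lam = k * (k - 1) * c ^ 2 := by
    have hsum := edf_sum (D := D) hcD
    have hsplit : ∑ g : G, extDiffCount D g
        = ∑ g ∈ (univ : Finset G).erase 0, extDiffCount D g + extDiffCount D 0 :=
      (Finset.sum_erase_add _ _ (mem_univ 0)).symm
    rw [hsplit, edf_zero hdisj, add_zero,
      Finset.sum_congr rfl (fun g hg => hEDF g (Finset.ne_of_mem_erase hg)),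
      Finset.sum_const, smul_eq_mul, Finset.card_erase_of_mem (mem_univ 0),
      Finset.card_univ, hn] at hsum
    exact hsum
  rw [hcard]
  have hk1 : (1 : ℕ) ≤ k := hk
  have hn1' : (1 : ℕ) ≤ n := le_of_lt hn1
  have hkeyQ : ((n : ℚ) - 1) * lam = (k : ℚ) * ((k : ℚ) - 1) * (c : ℚ) ^ 2 := by
    have := congrArg (fun x : ℕ => (x : ℚ)) hkey
    push_cast [Nat.cast_sub hk1, Nat.cast_sub hn1'] at this
    linarith [this]
  have hkQ : (k : ℚ) ≠ 0 := Nat.cast_ne_zero.mpr hk.ne'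
  have hcQ : (c : ℚ) ≠ 0 := Nat.cast_ne_zero.mpr hc.ne'
  have hnQ : (n : ℚ) - 1 ≠ 0 := by
    have : (1 : ℚ) < n := by exact_mod_cast hn1
    linarith
  field_simp
  linear_combination hkeyQ
end

section
/- In the authentication code obtained from a Youden square arrangement of a (v,k,λ)-SBIBD with equiprobable sources, the success probability of any key-substitution attack (replacing the known key K by any K' ≠ K) is exactly λ/k = (k−1)/(v−1). -/
/-!
The rows of the Youden square form a symmetric design: every row has `k` points and, because
each column is a bijection onto the points, every point lies in exactly `k` rows. The attack
`K ↦ K'` succeeds exactly on the points common to both rows (never in the same column, again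
by the column bijections), so it remains to see that two rows meet in `lam` points. Fix a row
`B i` and let `n j = #(B i ∩ B j)`. Double counting gives `∑ n j` and `∑ n j ^ 2`, and with
`lam (v - 1) = k (k - 1)` these force `∑_{j ≠ i} (n j - lam) ^ 2 = 0`.
-/

open Finset

namespace Finset

variable {ι X : Type*} [Fintype ι] [DecidableEq X]

theorem sum_card_inter_eq_sum_card_filter_mem (A : Finset X) (B : ι → Finset X) :
    ∑ j, #(A ∩ B j) = ∑ x ∈ A, #{j | x ∈ B j} := by
  simp_rw [← filter_mem_eq_inter, card_eq_sum_ones, sum_filter]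
  exact sum_comm

theorem sum_card_inter_sq_eq_sum_card_filter_mem (A : Finset X) (B : ι → Finset X) :
    ∑ j, #(A ∩ B j) ^ 2 = ∑ p ∈ A ×ˢ A, #{j | p.1 ∈ B j ∧ p.2 ∈ B j} := by
  simp_rw [sq, ← card_product, ← product_inter_product, ← mem_product]
  exact sum_card_inter_eq_sum_card_filter_mem _ _

end Finset

section SymmetricDesign

variable {ι X : Type*} [Fintype ι] [DecidableEq X] {B : ι → Finset X} {k lam : ℕ}

theorem sum_card_inter_of_design (hB : ∀ i, #(B i) = k) (hrep : ∀ x, #{i | x ∈ B i} = k)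
    (i : ι) : ∑ j, #(B i ∩ B j) = k * k := by
  simp [sum_card_inter_eq_sum_card_filter_mem, hrep, hB]

theorem sum_card_inter_sq_of_design (hB : ∀ i, #(B i) = k) (hrep : ∀ x, #{i | x ∈ B i} = k)
    (hpair : ∀ x y, x ≠ y → #{i | x ∈ B i ∧ y ∈ B i} = lam) (i : ι) :
    ∑ j, #(B i ∩ B j) ^ 2 = k * k + (k * k - k) * lam := by
  rw [sum_card_inter_sq_eq_sum_card_filter_mem]
  calc ∑ p ∈ B i ×ˢ B i, #{j | p.1 ∈ B j ∧ p.2 ∈ B j}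
      = ∑ p ∈ B i ×ˢ B i, if p.1 = p.2 then k else lam :=
        sum_congr rfl fun ⟨x, y⟩ _ => by
          split_ifs with hxy
          · obtain rfl : x = y := hxy
            simp [hrep]
          · exact hpair x y hxy
    _ = k * k + (k * k - k) * lam := by
        rw [sum_ite, sum_const, sum_const, filter_not, ← diag_eq_filter, product_sdiff_diag,
          diag_card, offDiag_card, hB, smul_eq_mul, smul_eq_mul]

theorem card_inter_eq_of_symmetric_design [DecidableEq ι] (hB : ∀ i, #(B i) = k)
    (hrep : ∀ x, #{i | x ∈ B i} = k) (hpair : ∀ x y, x ≠ y → #{i | x ∈ B i ∧ y ∈ B i} = lam)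
    (hnum : lam * (Fintype.card ι - 1) = k * (k - 1)) {i j : ι} (hij : i ≠ j) :
    #(B i ∩ B j) = lam := by
  let n : ι → ℤ := fun j => #(B i ∩ B j)
  have h1 : ∑ j, n j = k * k := by
    simp only [n]
    exact_mod_cast sum_card_inter_of_design hB hrep i
  have h2 : ∑ j, n j ^ 2 = k * k + (k * k - k) * lam := by
    simp only [n]
    rw [← Nat.cast_mul, ← Nat.cast_sub (Nat.le_mul_self k)]
    exact_mod_cast sum_card_inter_sq_of_design hB hrep hpair i
  have hnumZ : (lam : ℤ) * (Fintype.card ι - 1) = k * (k - 1) := by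
    have hι : 1 ≤ Fintype.card ι := Fintype.card_pos_iff.mpr ⟨i⟩
    have hk : ((k * (k - 1) : ℕ) : ℤ) = k * (k - 1) := by cases k <;> simp
    rw [← hk, ← hnum]
    push_cast [hι]
    ring
  -- `n i = k`, and the second moment about `lam` is exactly `(k - lam) ^ 2`: nothing is left for `j ≠ i`.
  have hvar : ∑ j, (n j - lam) ^ 2 = (n i - lam) ^ 2 := by
    have hni : n i = k := by simp [n, hB]
    simp only [sub_sq, sum_add_distrib, sum_sub_distrib, ← sum_mul, ← mul_sum, sum_const,
      card_univ, nsmul_eq_mul, h1, h2, hni]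
    linear_combination (lam : ℤ) * hnumZ
  rw [← add_sum_erase _ _ (mem_univ i), add_eq_left] at hvar
  have hsq := (sum_eq_zero_iff_of_nonneg fun j _ => sq_nonneg (n j - lam)).mp hvar j
    (mem_erase.mpr ⟨hij.symm, mem_univ j⟩)
  have hj : (#(B i ∩ B j) : ℤ) = lam := sub_eq_zero.mp (pow_eq_zero_iff two_ne_zero |>.mp hsq)
  exact_mod_cast hj

end SymmetricDesign

section YoudenSquare

variable {ι κ X : Type*} [Fintype κ] [DecidableEq X] {E : ι → κ → X}

theorem card_filter_mem_image_row [Fintype ι] (hrow : ∀ K, Function.Injective (E K))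
    (hcol : ∀ i, Function.Bijective fun K => E K i) (x : X) :
    #{K | x ∈ univ.image (E K)} = Fintype.card κ := by
  let g : κ → ι := fun i => (Equiv.ofBijective _ (hcol i)).symm x
  have hg : ∀ i, E (g i) i = x := fun i => (Equiv.ofBijective _ (hcol i)).apply_symm_apply x
  have hg_inj : g.Injective := fun i j hij => hrow (g i) <| by rw [hg i, hij, hg j]
  have hfilter : ({K | x ∈ univ.image (E K)} : Finset ι) = univ.map ⟨g, hg_inj⟩ := by
    ext K
    simp only [mem_filter, mem_univ, true_and, mem_image, mem_map, Function.Embedding.coeFn_mk]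
    refine ⟨fun ⟨i, hi⟩ => ⟨i, ?_⟩, fun ⟨i, hi⟩ => ⟨i, hi ▸ hg i⟩⟩
    exact (Equiv.ofBijective _ (hcol i)).symm_apply_eq.mpr hi.symm
  rw [hfilter, card_map, card_univ]

theorem card_filter_exists_ne_eq_card_inter [DecidableEq κ] (hrow : ∀ K, Function.Injective (E K))
    (hcol : ∀ i, Function.Injective fun K => E K i) {K K' : ι} (hne : K ≠ K') :
    #{i | ∃ j, j ≠ i ∧ E K' j = E K i} = #(univ.image (E K) ∩ univ.image (E K')) := by
  -- Column `i` of two different rows holds different points, so `j ≠ i` is automatic.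
  have hiff : ∀ i, (∃ j, j ≠ i ∧ E K' j = E K i) ↔ E K i ∈ univ.image (E K') := fun i => by
    simp only [mem_image, mem_univ, true_and]
    refine ⟨fun ⟨j, _, hj⟩ => ⟨j, hj⟩, fun ⟨j, hj⟩ => ⟨j, ?_, hj⟩⟩
    rintro rfl
    exact hne (hcol j hj).symm
  simp_rw [hiff, ← filter_mem_eq_inter, filter_image, card_image_of_injective _ (hrow K)]

end YoudenSquare

theorem natCast_div_eq_sub_one_div_sub_one {v k lam : ℕ} (hk : 0 < k) (hv : 1 < v)
    (hnum : lam * (v - 1) = k * (k - 1)) :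
    (lam : ℚ) / k = ((k : ℚ) - 1) / ((v : ℚ) - 1) := by
  have hvQ : (v : ℚ) - 1 ≠ 0 := sub_ne_zero.mpr (by exact_mod_cast hv.ne')
  rw [div_eq_div_iff (by positivity) hvQ]
  have := congrArg (Nat.cast : ℕ → ℚ) hnum
  push_cast [Nat.cast_sub hv.le, Nat.cast_sub hk] at this
  linarith

theorem stmt_9_general {X : Type*} [DecidableEq X] (v k lam : ℕ)
    (hk : 0 < k) (hv : 1 < v)
    (hnum : lam * (v - 1) = k * (k - 1))
    (E : Fin v → Fin k → X)
    (hrow : ∀ K : Fin v, Function.Injective (E K))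
    (hcol : ∀ i : Fin k, Function.Bijective fun K : Fin v => E K i)
    (hpair : ∀ x y : X, x ≠ y →
      (univ.filter fun K : Fin v => (∃ i, E K i = x) ∧ ∃ j, E K j = y).card = lam) :
    ∀ K K' : Fin v, K ≠ K' →
      ((univ.filter fun i : Fin k => ∃ j : Fin k, j ≠ i ∧ E K' j = E K i).card : ℚ) / k
          = (lam : ℚ) / k ∧
        (lam : ℚ) / k = ((k : ℚ) - 1) / ((v : ℚ) - 1) := by
  intro K K' hne
  have hblock : ∀ K, #(univ.image (E K)) = k := fun K => by
    rw [card_image_of_injective _ (hrow K), card_univ, Fintype.card_fin]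
  have hrep : ∀ x, #{K | x ∈ univ.image (E K)} = k := fun x => by
    rw [card_filter_mem_image_row hrow hcol, Fintype.card_fin]
  have hpair' : ∀ x y, x ≠ y → #{K | x ∈ univ.image (E K) ∧ y ∈ univ.image (E K)} = lam :=
    fun x y hxy => by simpa only [mem_image, mem_univ, true_and] using hpair x y hxy
  have hinter := card_inter_eq_of_symmetric_design hblock hrep hpair'
    (by rwa [Fintype.card_fin]) hne
  have hattack : #{i | ∃ j, j ≠ i ∧ E K' j = E K i} = lam := by
    convert (card_filter_exists_ne_eq_card_inter hrow (fun i => (hcol i).injective) hne).trans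
      hinter
  exact ⟨by rw [hattack], natCast_div_eq_sub_one_div_sub_one hk hv hnum⟩

theorem stmt_9 {X : Type*} [Fintype X] [DecidableEq X] (v k lam : ℕ)
    (hX : Fintype.card X = v) (hk : 0 < k) (hv : 1 < v)
    (hnum : lam * (v - 1) = k * (k - 1))
    (E : Fin v → Fin k → X)
    (hrow : ∀ K : Fin v, Function.Injective (E K))
    (hcol : ∀ i : Fin k, Function.Bijective fun K : Fin v => E K i)
    (hpair : ∀ x y : X, x ≠ y →
      (univ.filter fun K : Fin v => (∃ i, E K i = x) ∧ ∃ j, E K j = y).card = lam) :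
    ∀ K K' : Fin v, K ≠ K' →
      ((univ.filter fun i : Fin k => ∃ j : Fin k, j ≠ i ∧ E K' j = E K i).card : ℚ) / k
          = (lam : ℚ) / k ∧
        (lam : ℚ) / k = ((k : ℚ) - 1) / ((v : ℚ) - 1) :=
  stmt_9_general v k lam hk hv hnum E hrow hcol hpair
end

section
/- Let (X, B) be a (v,b,r,k,1)-BIBD whose blocks are ordered as rows of a b×k array E in which each point occurs exactly r/k times in each column. Fix a row K. Then the number of rows K' ≠ K that share a point with K occurring in different columns of K and K' is exactly r(k−1), and for each such K' the shared point is unique. -/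
/-!
Row `K` meets a row `K'` in a point lying in different columns exactly when, for some column `i`,
the point `E K i` occurs in `K'` in a column `j ≠ i`. Two rows share at most one point, so these
events are disjoint over `i`; a row never repeats a point, so for fixed `i` the rows are counted
column by column. Each point lies in exactly `r / k` rows in each column, giving
`k · (k - 1) · (r / k) = r (k - 1)` rows.
-/

open Finset Function

section RowArray

variable {X β ι : Type*} [DecidableEq X] [Fintype β] {E : β → ι → X}

theorem card_biUnion_filter_apply_eq [DecidableEq β] (hrow : ∀ K, Injective (E K))
    (s : Finset ι) (m : X) :
    (s.biUnion fun j => univ.filter fun K => E K j = m).card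
      = ∑ j ∈ s, (univ.filter fun K => E K j = m).card := by
  refine card_biUnion fun j _ j' _ hjj' => ?_
  simp only [onFun, disjoint_left, mem_filter, mem_univ, true_and]
  exact fun K h h' => hjj' (hrow K (h.trans h'.symm))

theorem card_filter_shares_point_in_other_column [Fintype X] [DecidableEq β] [Fintype ι]
    [DecidableEq ι] (hrow : ∀ K, Injective (E K))
    (hline : ∀ x y, x ≠ y → {K | (∃ i, E K i = x) ∧ ∃ j, E K j = y}.Subsingleton) (K : β) :
    (univ.filter fun K' => K' ≠ K ∧ ∃ (m : X) (i j : ι), i ≠ j ∧ E K i = m ∧ E K' j = m).card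
      = ∑ i, ∑ j ∈ univ.erase i, (univ.filter fun K' => E K' j = E K i).card := by
  have hsplit :
      (univ.filter fun K' => K' ≠ K ∧ ∃ (m : X) (i j : ι), i ≠ j ∧ E K i = m ∧ E K' j = m)
        = univ.biUnion fun i =>
            (univ.erase i).biUnion fun j => univ.filter fun K' => E K' j = E K i := by
    ext K'
    simp only [mem_filter, mem_biUnion, mem_univ, mem_erase, true_and, and_true]
    constructor
    · rintro ⟨-, _, i, j, hij, rfl, hj⟩
      exact ⟨i, j, hij.symm, hj⟩
    · rintro ⟨i, j, hji, hj⟩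
      refine ⟨?_, _, i, j, hji.symm, rfl, hj⟩
      rintro rfl
      exact hji (hrow _ hj)
  rw [hsplit, card_biUnion]
  · exact sum_congr rfl fun i _ => card_biUnion_filter_apply_eq hrow (univ.erase i) (E K i)
  · intro i _ i' _ hii'
    simp only [onFun, disjoint_left, mem_biUnion, mem_filter, mem_univ, mem_erase, true_and,
      and_true]
    rintro K' ⟨j, hji, hj⟩ ⟨j', -, hj'⟩
    obtain rfl : K = K' := hline _ _ (fun h => hii' (hrow K h))
      ⟨⟨i, rfl⟩, ⟨i', rfl⟩⟩ ⟨⟨j, hj⟩, ⟨j', hj'⟩⟩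
    exact hji (hrow _ hj)

end RowArray

theorem stmt_10_general {X : Type*} [Fintype X] [DecidableEq X] (b r k : ℕ)
    (E : Fin b → Fin k → X)
    (hrow : ∀ K : Fin b, Function.Injective (E K))
    (hcol : ∀ (x : X) (i : Fin k),
      (univ.filter fun K : Fin b => E K i = x).card * k = r)
    (hpair : ∀ x y : X, x ≠ y →
      (univ.filter fun K : Fin b => (∃ i, E K i = x) ∧ ∃ j, E K j = y).card = 1)
    (K : Fin b) :
    (univ.filter fun K' : Fin b => K' ≠ K ∧
        ∃ (m : X) (i j : Fin k), i ≠ j ∧ E K i = m ∧ E K' j = m).card = r * (k - 1) ∧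
      ∀ K' : Fin b, K' ≠ K →
        ∀ m₁ m₂ : X,
          (∃ i j : Fin k, i ≠ j ∧ E K i = m₁ ∧ E K' j = m₁) →
          (∃ i j : Fin k, i ≠ j ∧ E K i = m₂ ∧ E K' j = m₂) → m₁ = m₂ := by
  have hline : ∀ x y, x ≠ y → {K | (∃ i, E K i = x) ∧ ∃ j, E K j = y}.Subsingleton :=
    fun x y hxy A hA B hB =>
      card_le_one.mp (hpair x y hxy).le A (by simpa using hA) B (by simpa using hB)
  have hcol' : ∀ x (j : Fin k), (univ.filter fun K : Fin b => E K j = x).card = r / k :=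
    fun x j => (Nat.div_eq_of_eq_mul_left j.pos (hcol x j).symm).symm
  refine ⟨?_, ?_⟩
  · -- `convert` only bridges the instances deciding `∃ i : Fin k`
    -- (`Nat.decidableExistsFin` here, `Fintype.decidableExistsFintype` in the lemma)
    convert card_filter_shares_point_in_other_column hrow hline K
    simp only [hcol', sum_const, card_erase_of_mem (mem_univ _), card_univ, Fintype.card_fin,
      smul_eq_mul]
    rcases k.eq_zero_or_pos with rfl | hk
    · simp
    · have hdiv : r / k * k = r := hcol' (E K ⟨0, hk⟩) ⟨0, hk⟩ ▸ hcol _ _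
      calc r * (k - 1) = r / k * k * (k - 1) := by rw [hdiv]
        _ = k * ((k - 1) * (r / k)) := by ring
  · rintro K' hne m₁ m₂ ⟨i₁, j₁, -, e₁, f₁⟩ ⟨i₂, j₂, -, e₂, f₂⟩
    by_contra hm
    exact hne (hline m₁ m₂ hm ⟨⟨j₁, f₁⟩, ⟨j₂, f₂⟩⟩ ⟨⟨i₁, e₁⟩, ⟨i₂, e₂⟩⟩)

theorem stmt_10 {X : Type*} [Fintype X] [DecidableEq X] (v b r k : ℕ)
    (hX : Fintype.card X = v)
    (E : Fin b → Fin k → X)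
    (hrow : ∀ K : Fin b, Function.Injective (E K))
    (hrep : ∀ x : X, (univ.filter fun K : Fin b => ∃ i, E K i = x).card = r)
    (hcol : ∀ (x : X) (i : Fin k),
      (univ.filter fun K : Fin b => E K i = x).card * k = r)
    (hpair : ∀ x y : X, x ≠ y →
      (univ.filter fun K : Fin b => (∃ i, E K i = x) ∧ ∃ j, E K j = y).card = 1)
    (K : Fin b) :
    (univ.filter fun K' : Fin b => K' ≠ K ∧
        ∃ (m : X) (i j : Fin k), i ≠ j ∧ E K i = m ∧ E K' j = m).card = r * (k - 1) ∧
      ∀ K' : Fin b, K' ≠ K →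
        ∀ m₁ m₂ : X,
          (∃ i j : Fin k, i ≠ j ∧ E K i = m₁ ∧ E K' j = m₁) →
          (∃ i j : Fin k, i ≠ j ∧ E K i = m₂ ∧ E K' j = m₂) → m₁ = m₂ :=
  stmt_10_general b r k E hrow hcol hpair K
end

section
/- For the authentication code obtained from an equitably ordered (v,b,r,k,1)-BIBD with equiprobable sources, the optimal key-substitution attack has success probability exactly 1/k. -/
open Finset

theorem stmt_11 {X : Type*} [Fintype X] [DecidableEq X] (v b r k : ℕ)
    (hX : Fintype.card X = v) (hk : 2 ≤ k) (hr : 0 < r)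
    (E : Fin b → Fin k → X)
    (hrow : ∀ K : Fin b, Function.Injective (E K))
    (hrep : ∀ x : X, (univ.filter fun K : Fin b => ∃ i, E K i = x).card = r)
    (hcol : ∀ (x : X) (i : Fin k),
      (univ.filter fun K : Fin b => E K i = x).card * k = r)
    (hpair : ∀ x y : X, x ≠ y →
      (univ.filter fun K : Fin b => (∃ i, E K i = x) ∧ ∃ j, E K j = y).card = 1) :
    ∀ K : Fin b,
      (∃ K' : Fin b, K' ≠ K ∧
          ((univ.filter fun i : Fin k =>
            ∃ j : Fin k, j ≠ i ∧ E K' j = E K i).card : ℚ) / k = 1 / (k : ℚ)) ∧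
        ∀ K' : Fin b, K' ≠ K →
          ((univ.filter fun i : Fin k =>
            ∃ j : Fin k, j ≠ i ∧ E K' j = E K i).card : ℚ) / k ≤ 1 / (k : ℚ) := by
  intro K
  -- upper bound: the count is at most 1 for any K' ≠ K
  have hub : ∀ K' : Fin b, K' ≠ K →
      (univ.filter fun i : Fin k => ∃ j : Fin k, j ≠ i ∧ E K' j = E K i).card ≤ 1 := by
    intro K' hne
    by_contra h
    push_neg at h
    obtain ⟨i₁, hi₁, i₂, hi₂, hii⟩ := Finset.one_lt_card.mp h
    simp only [mem_filter, mem_univ, true_and] at hi₁ hi₂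
    obtain ⟨j₁, hj₁, he₁⟩ := hi₁
    obtain ⟨j₂, hj₂, he₂⟩ := hi₂
    have hxy : E K i₁ ≠ E K i₂ := fun h => hii (hrow K h)
    have hp := hpair (E K i₁) (E K i₂) hxy
    have hK : K ∈ univ.filter fun L : Fin b =>
        (∃ i, E L i = E K i₁) ∧ ∃ j, E L j = E K i₂ := by
      simp only [mem_filter, mem_univ, true_and]
      exact ⟨⟨i₁, rfl⟩, ⟨i₂, rfl⟩⟩
    have hK' : K' ∈ univ.filter fun L : Fin b =>
        (∃ i, E L i = E K i₁) ∧ ∃ j, E L j = E K i₂ := by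
      simp only [mem_filter, mem_univ, true_and]
      exact ⟨⟨j₁, he₁⟩, ⟨j₂, he₂⟩⟩
    exact hne (Finset.card_le_one.mp (le_of_eq hp) _ hK' _ hK)
  constructor
  · -- existence
    have hk0 : 0 < k := by omega
    set i0 : Fin k := ⟨0, hk0⟩ with hi0
    set x : X := E K i0 with hx
    have hsub : (univ.filter fun L : Fin b => E L i0 = x) ⊆
        (univ.filter fun L : Fin b => ∃ i, E L i = x) := by
      intro L hL
      simp only [mem_filter, mem_univ, true_and] at hL ⊢
      exact ⟨i0, hL⟩
    have hsmall := hcol x i0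
    have hbig := hrep x
    have hlt : (univ.filter fun L : Fin b => E L i0 = x).card <
        (univ.filter fun L : Fin b => ∃ i, E L i = x).card := by
      have h2 : (univ.filter fun L : Fin b => E L i0 = x).card * 2 ≤
          (univ.filter fun L : Fin b => E L i0 = x).card * k :=
        Nat.mul_le_mul_left _ hk
      omega
    have hne : ((univ.filter fun L : Fin b => ∃ i, E L i = x) \
        (univ.filter fun L : Fin b => E L i0 = x)).Nonempty := by
      rw [← Finset.card_pos, Finset.card_sdiff_of_subset hsub]
      omega
    obtain ⟨K', hK'⟩ := hne
    rw [Finset.mem_sdiff] at hK'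
    obtain ⟨hKin, hKout⟩ := hK'
    simp only [mem_filter, mem_univ, true_and] at hKin hKout
    obtain ⟨j, hj⟩ := hKin
    have hKne : K' ≠ K := fun h => hKout (by rw [h])
    refine ⟨K', hKne, ?_⟩
    have hmem : i0 ∈ univ.filter fun i : Fin k => ∃ j : Fin k, j ≠ i ∧ E K' j = E K i := by
      simp only [mem_filter, mem_univ, true_and]
      exact ⟨j, fun h => hKout (h ▸ hj), hj⟩
    have hcard : (univ.filter fun i : Fin k => ∃ j : Fin k, j ≠ i ∧ E K' j = E K i).card = 1 :=
      le_antisymm (hub K' hKne) (Finset.card_pos.mpr ⟨i0, hmem⟩)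
    rw [hcard]
    norm_num
  · intro K' hne
    have h := hub K' hne
    have hkQ : (0 : ℚ) < k := by exact_mod_cast (by omega : 0 < k)
    rw [div_le_div_iff₀ hkQ hkQ]
    have : ((univ.filter fun i : Fin k => ∃ j : Fin k, j ≠ i ∧ E K' j = E K i).card : ℚ) ≤ 1 := by
      exact_mod_cast h
    nlinarith
end

section
/- Let E be the encoding matrix of a c-splitting authentication code with b uniformly distributed keys, k sources, v messages, such that every message occurs exactly bc/v times in each column of E. Then the dual code, whose encoding matrix F has entry F(m,s) = {K : m ∈ E(K,s)}, is a (bc/v)-splitting authentication code with v keys and b messages in which every 'message' (original key) occurs exactly c times in each column of F. -/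
open Finset

section DualCode

variable {α β ι : Type*} [Fintype α] [DecidableEq β]

def dualCode (E : α → ι → Finset β) (m : β) (s : ι) : Finset α :=
  univ.filter fun K => m ∈ E K s

theorem pairwise_disjoint_dualCode {E : α → ι → Finset β}
    (hE : ∀ K, Pairwise fun s s' => Disjoint (E K s) (E K s')) (m : β) :
    Pairwise fun s s' => Disjoint (dualCode E m s) (dualCode E m s') := by
  intro s s' hss'
  refine disjoint_left.mpr fun K hK hK' => ?_
  simp only [dualCode, mem_filter] at hK hK'
  exact disjoint_left.mp (hE K hss') hK.2 hK'.2

theorem dualCode_dualCode [Fintype β] [DecidableEq α] (E : α → ι → Finset β) :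
    dualCode (dualCode E) = E := by
  ext K s m
  simp [dualCode]

end DualCode

theorem stmt_17 (b k v c : ℕ)
    (E : Fin b → Fin k → Finset (Fin v))
    (hcard : ∀ K s, (E K s).card = c)
    (hdisj : ∀ K : Fin b, ∀ s s' : Fin k, s ≠ s' → Disjoint (E K s) (E K s'))
    (hcol : ∀ (s : Fin k) (m : Fin v),
      (univ.filter fun K : Fin b => m ∈ E K s).card * v = b * c)
    (F : Fin v → Fin k → Finset (Fin b))
    (hF : ∀ m s, F m s = univ.filter fun K : Fin b => m ∈ E K s) :
    (∀ (m : Fin v) (s : Fin k), (F m s).card * v = b * c) ∧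
      (∀ m : Fin v, ∀ s s' : Fin k, s ≠ s' → Disjoint (F m s) (F m s')) ∧
      (∀ (K : Fin b) (s : Fin k),
        (univ.filter fun m : Fin v => K ∈ F m s).card = c) := by
  obtain rfl : F = dualCode E := funext₂ hF
  exact ⟨fun m s => hcol s m, pairwise_disjoint_dualCode hdisj,
    fun K s => (congrArg card (congrFun₂ (dualCode_dualCode E) K s)).trans (hcard K s)⟩
end
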